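/- In the Game of Confidentiality, if both Bob and Carol know Alice's secret a, then Bob's payoff in every Nash equilibrium is at most 4, which is strictly less than his payoff 6 in the equilibrium (a?T:B, a?N:F, c?L:R) available when he keeps a from Carol; hence Bob's payoff-maximizing strategy is confidentiality (never forwarding a to Carol). -/

import Mathlib

inductive ACh | T | M | B
  deriving DecidableEq

instance : Fintype ACh where
  elems := {.T, .M, .B}
  complete := fun x => by cases x <;> simp
inductive BCh | N | I | F
  deriving DecidableEq

instance : Fintype BCh where
  elems := {.N, .I, .F}
  complete := fun x => by cases x <;> simp
inductive CCh | L | Cc | R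
  deriving DecidableEq

instance : Fintype CCh where
  elems := {.L, .Cc, .R}
  complete := fun x => by cases x <;> simp

def gACa : ACh → CCh → ℚ
  | .T, .L => 0
  | .T, .Cc => 0
  | .T, .R => 16
  | .M, .L => 4
  | .M, .Cc => 4
  | .M, .R => 4
  | .B, .L => 16
  | .B, .Cc => 0
  | .B, .R => 0

def gACc : ACh → CCh → ℚ
  | .T, .L => 16
  | .T, .Cc => 4
  | .T, .R => 0
  | .M, .L => 0
  | .M, .Cc => 4
  | .M, .R => 0
  | .B, .L => 0
  | .B, .Cc => 4
  | .B, .R => 16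

def gABa : ACh → BCh → ℚ
  | .T, .N => 2
  | .T, .I => 0
  | .T, .F => 0
  | .M, .N => 0
  | .M, .I => 2
  | .M, .F => 0
  | .B, .N => 0
  | .B, .I => 0
  | .B, .F => 2

def gABb : ACh → BCh → ℚ
  | .T, .N => 2
  | .T, .I => 0
  | .T, .F => 0
  | .M, .N => 0
  | .M, .I => 2
  | .M, .F => 0
  | .B, .N => 0
  | .B, .I => 0
  | .B, .F => 2

def gBCb : BCh → CCh → ℚ
  | .N, .L => 0
  | .N, .Cc => 0
  | .N, .R => 8
  | .I, .L => 2
  | .I, .Cc => 2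
  | .I, .R => 2
  | .F, .L => 8
  | .F, .Cc => 0
  | .F, .R => 0

def gBCc : BCh → CCh → ℚ
  | .N, .L => 8
  | .N, .Cc => 2
  | .N, .R => 0
  | .I, .L => 0
  | .I, .Cc => 2
  | .I, .R => 0
  | .F, .L => 0
  | .F, .Cc => 2
  | .F, .R => 8

def uA (x : ACh) (y : BCh) (z : CCh) : ℚ := gACa x z + gABa x y
def uB (x : ACh) (y : BCh) (z : CCh) : ℚ := gABb x y + gBCb y z
def uC (x : ACh) (y : BCh) (z : CCh) : ℚ := gACc x z + gBCc y z

-- Bob knows (a,b); Carol knows only c  (Bob keeps a confidential)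
def EUk (u : ACh → BCh → CCh → ℚ)
    (sA : Bool → ACh) (sB : Bool → Bool → BCh) (sC : Bool → CCh) : ℚ :=
  (∑ a : Bool, ∑ b : Bool, ∑ c : Bool, u (sA a) (sB a b) (sC c)) / 8

def NashK (sA : Bool → ACh) (sB : Bool → Bool → BCh) (sC : Bool → CCh) : Prop :=
  (∀ sA', EUk uA sA' sB sC ≤ EUk uA sA sB sC) ∧
  (∀ sB', EUk uB sA sB' sC ≤ EUk uB sA sB sC) ∧
  (∀ sC', EUk uC sA sB sC' ≤ EUk uC sA sB sC)

-- Bob and Carol both know a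
def EUs (u : ACh → BCh → CCh → ℚ)
    (sA : Bool → ACh) (sB : Bool → Bool → BCh) (sC : Bool → Bool → CCh) : ℚ :=
  (∑ a : Bool, ∑ b : Bool, ∑ c : Bool, u (sA a) (sB a b) (sC a c)) / 8

def NashS (sA : Bool → ACh) (sB : Bool → Bool → BCh) (sC : Bool → Bool → CCh) : Prop :=
  (∀ sA', EUs uA sA' sB sC ≤ EUs uA sA sB sC) ∧
  (∀ sB', EUs uB sA sB' sC ≤ EUs uB sA sB sC) ∧
  (∀ sC', EUs uC sA sB sC' ≤ EUs uC sA sB sC)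

def sAstar : Bool → ACh := fun a => if a then .T else .B
def sBstar : Bool → Bool → BCh := fun a _ => if a then .N else .F
def sCstar : Bool → CCh := fun c => if c then .L else .R

def gACaZ : ACh → CCh → ℤ
  | .T, .L => 0
  | .T, .Cc => 0
  | .T, .R => 16
  | .M, .L => 4
  | .M, .Cc => 4
  | .M, .R => 4
  | .B, .L => 16
  | .B, .Cc => 0
  | .B, .R => 0

def gACcZ : ACh → CCh → ℤ
  | .T, .L => 16
  | .T, .Cc => 4
  | .T, .R => 0
  | .M, .L => 0
  | .M, .Cc => 4
  | .M, .R => 0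
  | .B, .L => 0
  | .B, .Cc => 4
  | .B, .R => 16

def gABaZ : ACh → BCh → ℤ
  | .T, .N => 2
  | .T, .I => 0
  | .T, .F => 0
  | .M, .N => 0
  | .M, .I => 2
  | .M, .F => 0
  | .B, .N => 0
  | .B, .I => 0
  | .B, .F => 2

def gABbZ : ACh → BCh → ℤ
  | .T, .N => 2
  | .T, .I => 0
  | .T, .F => 0
  | .M, .N => 0
  | .M, .I => 2
  | .M, .F => 0
  | .B, .N => 0
  | .B, .I => 0
  | .B, .F => 2

def gBCbZ : BCh → CCh → ℤ
  | .N, .L => 0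
  | .N, .Cc => 0
  | .N, .R => 8
  | .I, .L => 2
  | .I, .Cc => 2
  | .I, .R => 2
  | .F, .L => 8
  | .F, .Cc => 0
  | .F, .R => 0

def gBCcZ : BCh → CCh → ℤ
  | .N, .L => 8
  | .N, .Cc => 2
  | .N, .R => 0
  | .I, .L => 0
  | .I, .Cc => 2
  | .I, .R => 0
  | .F, .L => 0
  | .F, .Cc => 2
  | .F, .R => 8


def uAz (x : ACh) (y : BCh) (z : CCh) : ℤ := gACaZ x z + gABaZ x y
def uBz (x : ACh) (y : BCh) (z : CCh) : ℤ := gABbZ x y + gBCbZ y z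
def uCz (x : ACh) (y : BCh) (z : CCh) : ℤ := gACcZ x z + gBCcZ y z

lemma castA : ∀ x y z, uA x y z = (uAz x y z : ℚ) := by
  intro x y z
  cases x <;> cases y <;> cases z <;>
    norm_num [uA, uAz, gACa, gACaZ, gABa, gABaZ]

lemma castB : ∀ x y z, uB x y z = (uBz x y z : ℚ) := by
  intro x y z
  cases x <;> cases y <;> cases z <;>
    norm_num [uB, uBz, gABb, gABbZ, gBCb, gBCbZ]

lemma castC : ∀ x y z, uC x y z = (uCz x y z : ℚ) := by
  intro x y z
  cases x <;> cases y <;> cases z <;>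
    norm_num [uC, uCz, gACc, gACcZ, gBCc, gBCcZ]

def WZ (u : ACh → BCh → CCh → ℤ) (x : ACh) (y0 y1 : BCh) (z0 z1 : CCh) : ℤ :=
  u x y0 z0 + u x y0 z1 + u x y1 z0 + u x y1 z1

def W (u : ACh → BCh → CCh → ℚ) (x : ACh) (tB : Bool → BCh) (tC : Bool → CCh) : ℚ :=
  u x (tB false) (tC false) + u x (tB false) (tC true) +
  u x (tB true) (tC false) + u x (tB true) (tC true)

lemma castWA (x tB tC) : W uA x tB tC = (WZ uAz x (tB false) (tB true) (tC false) (tC true) : ℚ) := by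
  simp [W, WZ, castA]
lemma castWB (x tB tC) : W uB x tB tC = (WZ uBz x (tB false) (tB true) (tC false) (tC true) : ℚ) := by
  simp [W, WZ, castB]
lemma castWC (x tB tC) : W uC x tB tC = (WZ uCz x (tB false) (tB true) (tC false) (tC true) : ℚ) := by
  simp [W, WZ, castC]

lemma euS (u : ACh → BCh → CCh → ℚ) (sA : Bool → ACh) (sB : Bool → Bool → BCh)
    (sC : Bool → Bool → CCh) :
    EUs u sA sB sC = (W u (sA false) (sB false) (sC false)
      + W u (sA true) (sB true) (sC true)) / 8 := by
  simp [EUs, W, Fintype.sum_bool]; ring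

lemma keyWZ : ∀ (x : ACh) (y0 y1 : BCh) (z0 z1 : CCh),
    ((∀ x', WZ uAz x' y0 y1 z0 z1 ≤ WZ uAz x y0 y1 z0 z1) ∧
     (∀ y0' y1', WZ uBz x y0' y1' z0 z1 ≤ WZ uBz x y0 y1 z0 z1) ∧
     (∀ z0' z1', WZ uCz x y0 y1 z0' z1' ≤ WZ uCz x y0 y1 z0 z1)) →
    WZ uBz x y0 y1 z0 z1 ≤ 16 := by decide

lemma perA {sA sB sC} (h : NashS sA sB sC) (a : Bool) :
    (∀ x', W uA x' (sB a) (sC a) ≤ W uA (sA a) (sB a) (sC a)) ∧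
    (∀ tB', W uB (sA a) tB' (sC a) ≤ W uB (sA a) (sB a) (sC a)) ∧
    (∀ tC', W uC (sA a) (sB a) tC' ≤ W uC (sA a) (sB a) (sC a)) := by
  obtain ⟨hA, hB, hC⟩ := h
  refine ⟨fun x' => ?_, fun tB' => ?_, fun tC' => ?_⟩
  · have := hA (fun a' => if a' = a then x' else sA a')
    rw [euS, euS] at this
    cases a <;> simp at this <;> linarith
  · have := hB (fun a' => if a' = a then tB' else sB a')
    rw [euS, euS] at this
    cases a <;> simp at this <;> linarith
  · have := hC (fun a' => if a' = a then tC' else sC a')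
    rw [euS, euS] at this
    cases a <;> simp at this <;> linarith

lemma keyW (x : ACh) (tB : Bool → BCh) (tC : Bool → CCh)
    (h : (∀ x', W uA x' tB tC ≤ W uA x tB tC) ∧
     (∀ tB', W uB x tB' tC ≤ W uB x tB tC) ∧
     (∀ tC', W uC x tB tC' ≤ W uC x tB tC)) : W uB x tB tC ≤ 16 := by
  obtain ⟨hA, hB, hC⟩ := h
  rw [castWB]
  have key := keyWZ x (tB false) (tB true) (tC false) (tC true) ⟨?_, ?_, ?_⟩
  · exact_mod_cast key
  · intro x'
    have := hA x'
    rw [castWA, castWA] at this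
    exact_mod_cast this
  · intro y0' y1'
    have := hB (fun b => if b then y1' else y0')
    rw [castWB, castWB] at this
    exact_mod_cast this
  · intro z0' z1'
    have := hC (fun c => if c then z1' else z0')
    rw [castWC, castWC] at this
    exact_mod_cast this

/-- If Bob and Carol both know a, every Nash equilibrium pays Bob at most 4, strictly
less than the 6 he earns in the equilibrium (a?T:B, a?N:F, c?L:R) available when he
keeps a from Carol: confidentiality is Bob's payoff-maximizing strategy. -/
theorem confidentiality_is_dominant :
    (∀ sA sB sC, NashS sA sB sC → EUs uB sA sB sC ≤ 4) ∧
    NashK sAstar sBstar sCstar ∧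
    EUk uB sAstar sBstar sCstar = 6 ∧ (4 : ℚ) < 6 := by
  refine ⟨?_, ⟨?_, ?_, ?_⟩, ?_, by norm_num⟩
  · intro sA sB sC h
    have h0 := keyW (sA false) (sB false) (sC false) (perA h false)
    have h1 := keyW (sA true) (sB true) (sC true) (perA h true)
    rw [euS]; linarith
  · intro sA'
    simp only [EUk, Fintype.sum_bool, sAstar, sBstar, sCstar]
    generalize sA' false = x0
    generalize sA' true = x1
    cases x0 <;> cases x1 <;> norm_num [uA, gACa, gABa]
  · intro sB'
    simp only [EUk, Fintype.sum_bool, sAstar, sBstar, sCstar]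
    generalize sB' false false = y00
    generalize sB' false true = y01
    generalize sB' true false = y10
    generalize sB' true true = y11
    cases y00 <;> cases y01 <;> cases y10 <;> cases y11 <;>
      norm_num [uB, gABb, gBCb]
  · intro sC'
    simp only [EUk, Fintype.sum_bool, sAstar, sBstar, sCstar]
    generalize sC' false = z0
    generalize sC' true = z1
    cases z0 <;> cases z1 <;> norm_num [uC, gACc, gBCc]
  · simp only [EUk, Fintype.sum_bool, sAstar, sBstar, sCstar]
    norm_num [uB, gABb, gBCb]
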